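/- Let a_1, a_2, a_3, a_4 ∈ ℝ² form a convex quadrilateral in cyclic order. Then there are at most two indices i ∈ {1,2,3,4} for which the region H_i^I ∩ ⋂_{j ≠ i} H_j^O is nonempty; that is, at most two of the four edges of the quadrilateral are good. -/
import Mathlib


/-- Twice the signed area of the triangle `p q r`; its sign tells on which side
of the directed line through `p` and `q` the point `r` lies. -/
def det2 (p q r : ℝ × ℝ) : ℝ :=
  (q.1 - p.1) * (r.2 - p.2) - (q.2 - p.2) * (r.1 - p.1)

/-- `v 0, v 1, v 2, v 3` form a convex quadrilateral in cyclic order: for each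
`i`, the points `v (i+2)` and `v (i+3)` lie strictly on the same side of the
line through `v i` and `v (i+1)`. -/
def ConvexCyclic (v : Fin 4 → ℝ × ℝ) : Prop :=
  ∀ i : Fin 4, 0 < det2 (v i) (v (i+1)) (v (i+2)) * det2 (v i) (v (i+1)) (v (i+3))

/-- The outer open half-plane of the edge `v i, v (i+1)`: the open half-plane
bounded by the line through `v i` and `v (i+1)` not containing `v (i+2)`
(and `v (i+3)`). -/
def Hout (v : Fin 4 → ℝ × ℝ) (i : Fin 4) : Set (ℝ × ℝ) :=
  {x | det2 (v i) (v (i+1)) x * det2 (v i) (v (i+1)) (v (i+2)) < 0}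

/-- The inner open half-plane of the edge `v i, v (i+1)`: the open half-plane
bounded by the line through `v i` and `v (i+1)` containing `v (i+2)`. -/
def Hin (v : Fin 4 → ℝ × ℝ) (i : Fin 4) : Set (ℝ × ℝ) :=
  {x | 0 < det2 (v i) (v (i+1)) x * det2 (v i) (v (i+1)) (v (i+2))}

/-- The edge `v i, v (i+1)` is good: some point lies in the inner half-plane of
this edge and in the outer half-planes of all other edges. -/
def GoodEdge (v : Fin 4 → ℝ × ℝ) (i : Fin 4) : Prop :=
  ∃ x, x ∈ Hin v i ∧ ∀ j, j ≠ i → x ∈ Hout v j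

/-- `det2` is affine in its third argument. -/
lemma det2_affine (p q a b : ℝ × ℝ) (t : ℝ) :
    det2 p q ((1-t)*a.1 + t*b.1, (1-t)*a.2 + t*b.2)
      = (1-t) * det2 p q a + t * det2 p q b := by
  simp only [det2]; ring

lemma det2_self_left (p q : ℝ × ℝ) : det2 p q p = 0 := by
  simp only [det2]; ring

lemma det2_self_right (p q : ℝ × ℝ) : det2 p q q = 0 := by
  simp only [det2]; ring

lemma det2_pp (p r : ℝ × ℝ) : det2 p p r = 0 := by
  simp only [det2]; ring

/-- A point with vanishing `det2 p q z` lies on the line through `p` and `q`. -/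
lemma on_line (p q z : ℝ × ℝ) (hpq : p ≠ q) (hz : det2 p q z = 0) :
    ∃ t : ℝ, z.1 = (1-t)*p.1 + t*q.1 ∧ z.2 = (1-t)*p.2 + t*q.2 := by
  simp only [det2] at hz
  by_cases h1 : q.1 - p.1 ≠ 0
  · refine ⟨(z.1 - p.1)/(q.1 - p.1), ?_, ?_⟩
    · field_simp; ring
    · field_simp
      linear_combination hz
  · push_neg at h1
    have h2 : q.2 - p.2 ≠ 0 := by
      intro h2
      apply hpq
      have : q.1 = p.1 := by linarith
      have : q.2 = p.2 := by linarith
      exact Prod.ext (by linarith) (by linarith) |>.symm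
    refine ⟨(z.2 - p.2)/(q.2 - p.2), ?_, ?_⟩
    · have hz1 : z.1 = p.1 := by
        rw [h1] at hz
        have := mul_eq_zero.mp (by linarith : (q.2 - p.2) * (z.1 - p.1) = 0)
        rcases this with h | h
        · exact absurd h h2
        · linarith
      rw [hz1]
      have : q.1 = p.1 := by linarith
      rw [this]; ring
    · field_simp; ring

/-- Core lemma: opposite edges can't both be good.  Here `x` is a witness for
edge `p0 p1` being good and `y` a witness for edge `p2 p3` being good (only the
relevant inequalities are kept). -/
lemma core (p0 p1 p2 p3 x y : ℝ × ℝ)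
    (c1 : 0 < det2 p1 p2 p3 * det2 p1 p2 p0)
    (c3 : 0 < det2 p3 p0 p1 * det2 p3 p0 p2)
    (hx0 : 0 < det2 p0 p1 x * det2 p0 p1 p2)
    (hx1 : det2 p1 p2 x * det2 p1 p2 p3 < 0)
    (hx3 : det2 p3 p0 x * det2 p3 p0 p1 < 0)
    (hy0 : det2 p0 p1 y * det2 p0 p1 p2 < 0)
    (hy1 : det2 p1 p2 y * det2 p1 p2 p3 < 0)
    (hy3 : det2 p3 p0 y * det2 p3 p0 p1 < 0) : False := by
  -- basic nonvanishing facts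
  have s0ne : det2 p0 p1 p2 ≠ 0 := by
    intro h; rw [h, mul_zero] at hx0; exact lt_irrefl 0 hx0
  have hpq : p0 ≠ p1 := by
    rintro rfl
    rw [det2_pp, zero_mul] at hx0; exact lt_irrefl 0 hx0
  -- build the point z on segment xy lying on line p0 p1
  set u : ℝ := det2 p0 p1 x * det2 p0 p1 p2 with hu
  set w : ℝ := -(det2 p0 p1 y * det2 p0 p1 p2) with hw
  have hupos : 0 < u := hx0
  have hwpos : 0 < w := by simp only [hw]; linarith
  set l : ℝ := u / (u + w) with hl
  have huw : 0 < u + w := by linarith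
  have hl0 : 0 < l := div_pos hupos huw
  have hl1 : l < 1 := by
    rw [hl, div_lt_one huw]; linarith
  set z : ℝ × ℝ := ((1-l)*x.1 + l*y.1, (1-l)*x.2 + l*y.2) with hzdef
  have haff : ∀ p q : ℝ × ℝ, det2 p q z = (1-l) * det2 p q x + l * det2 p q y :=
    fun p q => det2_affine p q x y l
  have hz0 : det2 p0 p1 z = 0 := by
    have h := haff p0 p1
    have hmul : det2 p0 p1 z * det2 p0 p1 p2 = (1-l)*u - l*w := by
      rw [h]; simp only [hu, hw]; ring
    have hlw : l * (u + w) = u := by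
      rw [hl]; field_simp
    have : det2 p0 p1 z * det2 p0 p1 p2 = 0 := by
      rw [hmul]; linear_combination -hlw
    exact (mul_eq_zero.mp this).resolve_right s0ne
  have hz1 : det2 p1 p2 z * det2 p1 p2 p3 < 0 := by
    have h : det2 p1 p2 z * det2 p1 p2 p3
        = (1-l) * (det2 p1 p2 x * det2 p1 p2 p3) + l * (det2 p1 p2 y * det2 p1 p2 p3) := by
      rw [haff p1 p2]; ring
    have h1 := mul_neg_of_pos_of_neg hl0 hy1
    have h2 := mul_neg_of_pos_of_neg (show (0:ℝ) < 1 - l by linarith) hx1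
    linarith [h, h1, h2]
  have hz3 : det2 p3 p0 z * det2 p3 p0 p1 < 0 := by
    have h : det2 p3 p0 z * det2 p3 p0 p1
        = (1-l) * (det2 p3 p0 x * det2 p3 p0 p1) + l * (det2 p3 p0 y * det2 p3 p0 p1) := by
      rw [haff p3 p0]; ring
    have h1 := mul_neg_of_pos_of_neg hl0 hy3
    have h2 := mul_neg_of_pos_of_neg (show (0:ℝ) < 1 - l by linarith) hx3
    linarith [h, h1, h2]
  -- z lies on the line p0 p1
  obtain ⟨t, ht1, ht2⟩ := on_line p0 p1 z hpq hz0
  have hzt : z = ((1-t)*p0.1 + t*p1.1, (1-t)*p0.2 + t*p1.2) :=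
    Prod.ext ht1 ht2
  -- evaluate the two side constraints along the line
  have e1 : det2 p1 p2 z = (1-t) * det2 p1 p2 p0 := by
    rw [hzt, det2_affine p1 p2 p0 p1 t, det2_self_left, mul_zero, add_zero]
  have e3 : det2 p3 p0 z = t * det2 p3 p0 p1 := by
    rw [hzt, det2_affine p3 p0 p0 p1 t, det2_self_right, mul_zero, zero_add]
  have hA : (1-t) * (det2 p1 p2 p0 * det2 p1 p2 p3) < 0 := by
    have h := hz1; rw [e1] at h
    calc (1-t) * (det2 p1 p2 p0 * det2 p1 p2 p3)
        = (1-t) * det2 p1 p2 p0 * det2 p1 p2 p3 := by ring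
      _ < 0 := h
  have hB : t * (det2 p3 p0 p1 * det2 p3 p0 p1) < 0 := by
    have h := hz3; rw [e3] at h
    calc t * (det2 p3 p0 p1 * det2 p3 p0 p1)
        = t * det2 p3 p0 p1 * det2 p3 p0 p1 := by ring
      _ < 0 := h
  have hpos1 : 0 < det2 p1 p2 p0 * det2 p1 p2 p3 := by rw [mul_comm]; exact c1
  have hsq : 0 ≤ det2 p3 p0 p1 * det2 p3 p0 p1 := mul_self_nonneg _
  have ht_gt : 1 < t := by
    by_contra h
    push_neg at h
    exact absurd hA (not_lt.2 (mul_nonneg (by linarith) hpos1.le))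
  have ht_lt : t < 0 := by
    by_contra h
    push_neg at h
    exact absurd hB (not_lt.2 (mul_nonneg h hsq))
  linarith

/-- A convex quadrilateral in cyclic order has at most two good
edges. -/
theorem at_most_two_good_edges (v : Fin 4 → ℝ × ℝ) (hconv : ConvexCyclic v) :
    {i : Fin 4 | GoodEdge v i}.ncard ≤ 2 := by
  have h02 : ¬ (GoodEdge v 0 ∧ GoodEdge v 2) := by
    rintro ⟨⟨x, hxin, hxout⟩, ⟨y, hyin, hyout⟩⟩
    have hx1 := hxout 1 (by decide)
    have hx3 := hxout 3 (by decide)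
    have hy0 := hyout 0 (by decide)
    have hy1 := hyout 1 (by decide)
    have hy3 := hyout 3 (by decide)
    have c1 := hconv 1
    have c3 := hconv 3
    simp only [Hin, Hout, Set.mem_setOf_eq,
      show ((0:Fin 4)+1) = 1 from rfl, show ((0:Fin 4)+2) = 2 from rfl,
      show ((1:Fin 4)+1) = 2 from rfl, show ((1:Fin 4)+2) = 3 from rfl,
      show ((1:Fin 4)+3) = 0 from rfl,
      show ((2:Fin 4)+1) = 3 from rfl, show ((2:Fin 4)+2) = 0 from rfl,
      show ((3:Fin 4)+1) = 0 from rfl, show ((3:Fin 4)+2) = 1 from rfl,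
      show ((3:Fin 4)+3) = 2 from rfl] at hxin hx1 hx3 hyin hy0 hy1 hy3 c1 c3
    exact core (v 0) (v 1) (v 2) (v 3) x y c1 c3 hxin hx1 hx3 hy0 hy1 hy3
  have h13 : ¬ (GoodEdge v 1 ∧ GoodEdge v 3) := by
    rintro ⟨⟨x, hxin, hxout⟩, ⟨y, hyin, hyout⟩⟩
    have hx2 := hxout 2 (by decide)
    have hx0 := hxout 0 (by decide)
    have hy1 := hyout 1 (by decide)
    have hy2 := hyout 2 (by decide)
    have hy0 := hyout 0 (by decide)
    have c1 := hconv 2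
    have c3 := hconv 0
    simp only [Hin, Hout, Set.mem_setOf_eq,
      show ((0:Fin 4)+1) = 1 from rfl, show ((0:Fin 4)+2) = 2 from rfl,
      show ((0:Fin 4)+3) = 3 from rfl,
      show ((1:Fin 4)+1) = 2 from rfl, show ((1:Fin 4)+2) = 3 from rfl,
      show ((2:Fin 4)+1) = 3 from rfl, show ((2:Fin 4)+2) = 0 from rfl,
      show ((2:Fin 4)+3) = 1 from rfl,
      show ((3:Fin 4)+1) = 0 from rfl, show ((3:Fin 4)+2) = 1 from rfl] at hxin hx2 hx0 hyin hy1 hy2 hy0 c1 c3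
    exact core (v 1) (v 2) (v 3) (v 0) x y c1 c3 hxin hx2 hx0 hy1 hy2 hy0
  -- counting
  have key : ∀ (a b : Fin 4), {i : Fin 4 | GoodEdge v i} ⊆ {a, b} →
      {i : Fin 4 | GoodEdge v i}.ncard ≤ 2 := by
    intro a b hsub
    calc {i : Fin 4 | GoodEdge v i}.ncard ≤ ({a, b} : Set (Fin 4)).ncard :=
          Set.ncard_le_ncard hsub (Set.toFinite _)
      _ ≤ 2 := by
          apply le_trans (Set.ncard_insert_le a {b})
          simp
  by_cases h0 : GoodEdge v 0
  · by_cases h1 : GoodEdge v 1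
    · apply key 0 1
      intro i hi
      simp only [Set.mem_setOf_eq] at hi
      fin_cases i
      · simp
      · simp
      · exact absurd ⟨h0, hi⟩ h02
      · exact absurd ⟨h1, hi⟩ h13
    · apply key 0 3
      intro i hi
      simp only [Set.mem_setOf_eq] at hi
      fin_cases i
      · simp
      · exact absurd hi h1
      · exact absurd ⟨h0, hi⟩ h02
      · simp
  · by_cases h1 : GoodEdge v 1
    · apply key 1 2
      intro i hi
      simp only [Set.mem_setOf_eq] at hi
      fin_cases i
      · exact absurd hi h0
      · simp
      · simp
      · exact absurd ⟨h1, hi⟩ h13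
    · apply key 2 3
      intro i hi
      simp only [Set.mem_setOf_eq] at hi
      fin_cases i
      · exact absurd hi h0
      · exact absurd hi h1
      · simp
      · simp
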